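/- arXiv:2111.10731 — 3 statements merged into one kernel-verified Lean document; each statement's English description precedes it below -/
import Mathlib

section
/- If G : V → ℝ is a nonnegative P-function, i.e., G(ζm1 + (1-ζ)m2) ≤ G(m1) + G(m2) for all m1, m2 ∈ V, ζ ∈ [0,1], and G is integrable on [m1, m2] with m1 < m2, then G((m1+m2)/2) ≤ (2/(m2-m1)) ∫_{m1}^{m2} G(x) dx ≤ 2[G(m1) + G(m2)]. -/
/-! Integrating the P-inequality `G((a + b)/2) ≤ G x + G (a + b - x)` over `[a, b]`, and using that
`x ↦ a + b - x` preserves the integral, gives the left inequality; integrating the pointwise bound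
`G x ≤ G a + G b`, valid on the whole segment `[a, b]`, gives the right one. -/

open MeasureTheory intervalIntegral

theorem intervalIntegral.integral_comp_add_sub {E : Type*} [NormedAddCommGroup E] [NormedSpace ℝ E]
    (f : ℝ → E) (a b : ℝ) : ∫ x in a..b, f (a + b - x) = ∫ x in a..b, f x := by
  rw [integral_comp_sub_left, add_sub_cancel_right, add_sub_cancel_left]

theorem IntervalIntegrable.comp_add_sub {f : ℝ → ℝ} {a b : ℝ}
    (hf : IntervalIntegrable f volume a b) :
    IntervalIntegrable (fun x => f (a + b - x)) volume a b := by
  simpa only [add_sub_cancel_right, add_sub_cancel_left] using (hf.comp_sub_left (a + b)).symm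

section PFunction

variable {V : Set ℝ} {G : ℝ → ℝ}
  (hP : ∀ a ∈ V, ∀ b ∈ V, ∀ ζ ∈ Set.Icc (0:ℝ) 1, G (ζ * a + (1 - ζ) * b) ≤ G a + G b)
include hP

theorem apply_le_add_of_mem_segment {a b x : ℝ} (ha : a ∈ V) (hb : b ∈ V)
    (hx : x ∈ segment ℝ a b) : G x ≤ G a + G b := by
  obtain ⟨s, t, hs, ht, hst, rfl⟩ := hx
  obtain rfl : t = 1 - s := by linarith
  exact hP a ha b hb s ⟨hs, by linarith⟩

theorem apply_midpoint_le_add {a b : ℝ} (ha : a ∈ V) (hb : b ∈ V) :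
    G ((a + b) / 2) ≤ G a + G b := by
  have h := hP a ha b hb (1 / 2) ⟨by norm_num, by norm_num⟩
  rwa [show (1 / 2 : ℝ) * a + (1 - 1 / 2) * b = (a + b) / 2 by ring] at h

theorem mul_apply_midpoint_le_two_mul_integral {a b : ℝ} (hab : a ≤ b) (hsub : Set.Icc a b ⊆ V)
    (hint : IntervalIntegrable G volume a b) :
    (b - a) * G ((a + b) / 2) ≤ 2 * ∫ x in a..b, G x := by
  have hpoint : ∀ x ∈ Set.Icc a b, G ((a + b) / 2) ≤ G x + G (a + b - x) := fun x hx => by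
    have hx' : a + b - x ∈ Set.Icc a b := ⟨by linarith [hx.2], by linarith [hx.1]⟩
    simpa only [add_sub_cancel] using apply_midpoint_le_add hP (hsub hx) (hsub hx')
  calc (b - a) * G ((a + b) / 2) = ∫ _ in a..b, G ((a + b) / 2) := by
        rw [intervalIntegral.integral_const, smul_eq_mul]
    _ ≤ ∫ x in a..b, (G x + G (a + b - x)) :=
        integral_mono_on hab intervalIntegrable_const (hint.add hint.comp_add_sub) hpoint
    _ = 2 * ∫ x in a..b, G x := by
        rw [integral_add hint hint.comp_add_sub, integral_comp_add_sub, two_mul]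

theorem integral_le_mul_add {a b : ℝ} (hab : a ≤ b) (ha : a ∈ V) (hb : b ∈ V)
    (hint : IntervalIntegrable G volume a b) :
    ∫ x in a..b, G x ≤ (b - a) * (G a + G b) := by
  have hpoint : ∀ x ∈ Set.Icc a b, G x ≤ G a + G b := fun x hx =>
    apply_le_add_of_mem_segment hP ha hb (by rwa [segment_eq_Icc hab])
  calc ∫ x in a..b, G x ≤ ∫ _ in a..b, (G a + G b) :=
        integral_mono_on hab hint intervalIntegrable_const hpoint
    _ = (b - a) * (G a + G b) := by rw [intervalIntegral.integral_const, smul_eq_mul]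

end PFunction

theorem p_function_hh_general (V : Set ℝ) (hV : Convex ℝ V) (G : ℝ → ℝ)
    (hP : ∀ a ∈ V, ∀ b ∈ V, ∀ ζ ∈ Set.Icc (0:ℝ) 1,
      G (ζ * a + (1 - ζ) * b) ≤ G a + G b)
    (m1 m2 : ℝ) (hm1 : m1 ∈ V) (hm2 : m2 ∈ V) (hlt : m1 < m2)
    (hint : IntervalIntegrable G volume m1 m2) :
    G ((m1 + m2) / 2) ≤ (2 / (m2 - m1)) * ∫ x in m1..m2, G x ∧
      (2 / (m2 - m1)) * ∫ x in m1..m2, G x ≤ 2 * (G m1 + G m2) := by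
  have hlen : 0 < m2 - m1 := sub_pos.mpr hlt
  have hsub : Set.Icc m1 m2 ⊆ V := segment_eq_Icc hlt.le ▸ hV.segment_subset hm1 hm2
  have hlower := mul_apply_midpoint_le_two_mul_integral hP hlt.le hsub hint
  have hupper := integral_le_mul_add hP hlt.le hm1 hm2 hint
  rw [div_mul_eq_mul_div, le_div_iff₀ hlen, div_le_iff₀ hlen]
  constructor <;> nlinarith

theorem p_function_hh (V : Set ℝ) (hV : Convex ℝ V) (G : ℝ → ℝ)
    (hnonneg : ∀ x ∈ V, 0 ≤ G x)
    (hP : ∀ a ∈ V, ∀ b ∈ V, ∀ ζ ∈ Set.Icc (0:ℝ) 1,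
      G (ζ * a + (1 - ζ) * b) ≤ G a + G b)
    (m1 m2 : ℝ) (hm1 : m1 ∈ V) (hm2 : m2 ∈ V) (hlt : m1 < m2)
    (hint : IntervalIntegrable G volume m1 m2) :
    G ((m1 + m2) / 2) ≤ (2 / (m2 - m1)) * ∫ x in m1..m2, G x ∧
      (2 / (m2 - m1)) * ∫ x in m1..m2, G x ≤ 2 * (G m1 + G m2) :=
  p_function_hh_general V hV G hP m1 m2 hm1 hm2 hlt hint
end

section
/- Let G : V ⊆ ℝ → ℝ be differentiable with |G'| convex on [m1, m2], m1 < m2. Then |(1/(m2-m1)) ∫_{m1}^{m2} G(x) dx - G((m1+m2)/2)| ≤ ((m2-m1)/8)·(|G'(m1)| + |G'(m2)|). -/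
/-!
Two integrations by parts give `(b - a) G(m) - ∫ G = ∫ K G'` with `m` the midpoint and the Peano
kernel `K x = x - a` on `[a, m]`, `K x = x - b` on `[m, b]`. Convexity bounds `|G'|` by its secant
`L` through `(a, |G' a|)` and `(b, |G' b|)`. Since `|K|` is symmetric about `m` while
`L x + L (a + b - x) = |G' a| + |G' b|`, the bound `∫ |K| L` equals
`(b - a)² / 8 · (|G' a| + |G' b|)`.
-/

open MeasureTheory intervalIntegral Set

noncomputable def secant (f : ℝ → ℝ) (a b x : ℝ) : ℝ := ((b - x) * f a + (x - a) * f b) / (b - a)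

@[fun_prop]
lemma continuous_secant (f : ℝ → ℝ) (a b : ℝ) : Continuous (secant f a b) := by
  unfold secant; fun_prop

lemma secant_add_secant_reflect (f : ℝ → ℝ) {a b : ℝ} (hab : a ≠ b) (x : ℝ) :
    secant f a b x + secant f a b (a + b - x) = f a + f b := by
  have : b - a ≠ 0 := sub_ne_zero.2 hab.symm
  unfold secant
  field_simp
  ring

lemma ConvexOn.le_secant {f : ℝ → ℝ} {a b x : ℝ} (hf : ConvexOn ℝ (Icc a b) f) (hab : a < b)
    (hx : x ∈ Icc a b) : f x ≤ secant f a b x := by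
  have hba : 0 < b - a := sub_pos.2 hab
  have hcomb : ((b - x) / (b - a)) • a + ((x - a) / (b - a)) • b = x := by
    simp only [smul_eq_mul]; field_simp; ring
  have := hf.2 (left_mem_Icc.2 hab.le) (right_mem_Icc.2 hab.le)
    (div_nonneg (sub_nonneg.2 hx.2) hba.le) (div_nonneg (sub_nonneg.2 hx.1) hba.le)
    (by field_simp; ring)
  rw [hcomb] at this
  simpa only [secant, smul_eq_mul, add_div, mul_div_right_comm] using this

lemma integral_tent_mul_secant (f : ℝ → ℝ) {a b : ℝ} (hab : a ≠ b) :
    (∫ x in a..(a + b) / 2, (x - a) * secant f a b x) +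
      ∫ x in (a + b) / 2..b, (b - x) * secant f a b x = (b - a) ^ 2 / 8 * (f a + f b) := by
  have hreflect : ∫ x in (a + b) / 2..b, (b - x) * secant f a b x =
      ∫ x in a..(a + b) / 2, (x - a) * secant f a b (a + b - x) := by
    have := integral_comp_sub_left (fun y => (y - a) * secant f a b (a + b - y))
      (a := (a + b) / 2) (b := b) (a + b)
    rw [add_sub_cancel_right, show a + b - (a + b) / 2 = (a + b) / 2 by ring] at this
    rw [← this]
    congr 1 with x
    rw [sub_sub_cancel]; ring
  have hint_secant : IntervalIntegrable (fun x => (x - a) * secant f a b x) volume a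
      ((a + b) / 2) := (by fun_prop : Continuous _).intervalIntegrable _ _
  have hint_reflect : IntervalIntegrable (fun x => (x - a) * secant f a b (a + b - x)) volume a
      ((a + b) / 2) := (by fun_prop : Continuous _).intervalIntegrable _ _
  rw [hreflect, ← integral_add hint_secant hint_reflect]
  calc (∫ x in a..(a + b) / 2, (x - a) * secant f a b x + (x - a) * secant f a b (a + b - x))
      = ∫ x in a..(a + b) / 2, (x - a) * (f a + f b) := by
        simp only [← mul_add, secant_add_secant_reflect f hab]
    _ = (b - a) ^ 2 / 8 * (f a + f b) := by
        rw [intervalIntegral.integral_mul_const, integral_comp_sub_right (fun x => x), integral_id]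
        ring

lemma integral_sub_mul_deriv {G G' : ℝ → ℝ} {a b : ℝ} (p : ℝ)
    (hG : ∀ x ∈ uIcc a b, HasDerivAt G (G' x) x) (hG' : IntervalIntegrable G' volume a b) :
    ∫ x in a..b, (x - p) * G' x = (b - p) * G b - (a - p) * G a - ∫ x in a..b, G x := by
  simpa using integral_mul_deriv_eq_deriv_mul (fun x _ => (hasDerivAt_id x).sub_const p) hG
    intervalIntegrable_const hG'

lemma mul_midpoint_sub_integral_eq {G G' : ℝ → ℝ} {a b : ℝ} (hab : a ≤ b)
    (hG : ∀ x ∈ Icc a b, HasDerivAt G (G' x) x) (hG' : IntervalIntegrable G' volume a b) :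
    (b - a) * G ((a + b) / 2) - ∫ x in a..b, G x =
      (∫ x in a..(a + b) / 2, (x - a) * G' x) - ∫ x in (a + b) / 2..b, (b - x) * G' x := by
  have hmem : (a + b) / 2 ∈ uIcc a b := mem_uIcc_of_le (by linarith) (by linarith)
  set m := (a + b) / 2
  have hleft : uIcc a m ⊆ uIcc a b := uIcc_subset_uIcc_left hmem
  have hright : uIcc m b ⊆ uIcc a b := uIcc_subset_uIcc_right hmem
  rw [← uIcc_of_le hab] at hG
  have hGi : IntervalIntegrable G volume a b := (HasDerivAt.continuousOn hG).intervalIntegrable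
  have hflip : ∫ x in m..b, (b - x) * G' x = -∫ x in m..b, (x - b) * G' x := by
    rw [← intervalIntegral.integral_neg]; simp only [← neg_mul, neg_sub]
  rw [hflip, ← integral_add_adjacent_intervals (hGi.mono_set hleft) (hGi.mono_set hright),
    integral_sub_mul_deriv a (fun x hx => hG x (hleft hx)) (hG'.mono_set hleft),
    integral_sub_mul_deriv b (fun x hx => hG x (hright hx)) (hG'.mono_set hright)]
  ring

lemma abs_integral_mul_le_integral_mul {k g h : ℝ → ℝ} {a b : ℝ} (hab : a ≤ b)
    (hk : ContinuousOn k (uIcc a b)) (hk0 : ∀ x ∈ Icc a b, 0 ≤ k x)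
    (hg : IntervalIntegrable g volume a b) (hh : IntervalIntegrable h volume a b)
    (hgh : ∀ x ∈ Icc a b, |g x| ≤ h x) :
    |∫ x in a..b, k x * g x| ≤ ∫ x in a..b, k x * h x := by
  refine (abs_integral_le_integral_abs hab).trans
    (integral_mono_on hab (hg.continuousOn_mul hk).abs (hh.continuousOn_mul hk) fun x hx => ?_)
  rw [abs_mul, abs_of_nonneg (hk0 x hx)]
  exact mul_le_mul_of_nonneg_left (hgh x hx) (hk0 x hx)

lemma abs_mul_midpoint_sub_integral_le {G G' : ℝ → ℝ} {a b : ℝ} (hab : a < b)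
    (hG : ∀ x ∈ Icc a b, HasDerivAt G (G' x) x) (hG' : IntervalIntegrable G' volume a b)
    (hconv : ConvexOn ℝ (Icc a b) fun x => |G' x|) :
    |(b - a) * G ((a + b) / 2) - ∫ x in a..b, G x| ≤ (b - a) ^ 2 / 8 * (|G' a| + |G' b|) := by
  have ham : a ≤ (a + b) / 2 := by linarith
  have hmb : (a + b) / 2 ≤ b := by linarith
  have hmem : (a + b) / 2 ∈ uIcc a b := mem_uIcc_of_le ham hmb
  have hbound : ∀ x ∈ Icc a b, |G' x| ≤ secant (fun x => |G' x|) a b x :=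
    fun x hx => hconv.le_secant hab hx
  have hleft := abs_integral_mul_le_integral_mul ham (by fun_prop)
    (fun x hx => sub_nonneg.2 hx.1) (hG'.mono_set (uIcc_subset_uIcc_left hmem))
    ((continuous_secant _ a b).intervalIntegrable _ _)
    (fun x hx => hbound x ⟨hx.1, hx.2.trans hmb⟩)
  have hright := abs_integral_mul_le_integral_mul hmb (by fun_prop)
    (fun x hx => sub_nonneg.2 hx.2) (hG'.mono_set (uIcc_subset_uIcc_right hmem))
    ((continuous_secant _ a b).intervalIntegrable _ _)
    (fun x hx => hbound x ⟨ham.trans hx.1, hx.2⟩)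
  rw [mul_midpoint_sub_integral_eq hab.le hG hG']
  exact (abs_sub _ _).trans ((add_le_add hleft hright).trans_eq
    (integral_tent_mul_secant _ hab.ne))

theorem kirmaci_midpoint_general (m1 m2 : ℝ) (G : ℝ → ℝ) (hlt : m1 < m2)
    (V : Set ℝ) (hVI : Set.Icc m1 m2 ⊆ V)
    (hdiff : ∀ x ∈ V, DifferentiableAt ℝ G x)
    (hG' : IntervalIntegrable (deriv G) volume m1 m2)
    (hconv : ConvexOn ℝ (Set.Icc m1 m2) (fun x => |deriv G x|)) :
    |(1 / (m2 - m1)) * (∫ x in m1..m2, G x) - G ((m1 + m2) / 2)| ≤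
      ((m2 - m1) / 8) * (|deriv G m1| + |deriv G m2|) := by
  have hpos : 0 < m2 - m1 := sub_pos.2 hlt
  have hkernel := abs_mul_midpoint_sub_integral_le hlt
    (fun x hx => (hdiff x (hVI hx)).hasDerivAt) hG' hconv
  calc |(1 / (m2 - m1)) * (∫ x in m1..m2, G x) - G ((m1 + m2) / 2)|
      = |(m2 - m1) * G ((m1 + m2) / 2) - ∫ x in m1..m2, G x| / (m2 - m1) := by
        rw [← abs_of_pos hpos, ← abs_div, abs_of_pos hpos, ← abs_neg]
        congr 1
        field_simp
        ring
    _ ≤ (m2 - m1) / 8 * (|deriv G m1| + |deriv G m2|) := by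
        rw [div_le_iff₀ hpos]
        linarith

theorem kirmaci_midpoint (m1 m2 : ℝ) (G : ℝ → ℝ) (hlt : m1 < m2)
    (V : Set ℝ) (hV : IsOpen V) (hVI : Set.Icc m1 m2 ⊆ V)
    (hdiff : ∀ x ∈ V, DifferentiableAt ℝ G x)
    (hG' : IntervalIntegrable (deriv G) volume m1 m2)
    (hconv : ConvexOn ℝ (Set.Icc m1 m2) (fun x => |deriv G x|)) :
    |(1 / (m2 - m1)) * (∫ x in m1..m2, G x) - G ((m1 + m2) / 2)| ≤
      ((m2 - m1) / 8) * (|deriv G m1| + |deriv G m2|) :=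
  kirmaci_midpoint_general m1 m2 G hlt V hVI hdiff hG' hconv
end

section
/- Let m1, m2 ∈ ℝ with m1 < m2 and θ ∈ ℕ with θ ≥ 2. Then |A(m1^θ, m2^θ) - L_θ(m1, m2)^θ| ≤ (θ(m2-m1)/4)·A(|m1|^{θ-1}, |m2|^{θ-1}), i.e., |(m1^θ + m2^θ)/2 - (m2^{θ+1} - m1^{θ+1})/((θ+1)(m2-m1))| ≤ (θ(m2-m1)/4)·(|m1|^{θ-1} + |m2|^{θ-1})/2. -/
/-! Integrating by parts,
`∫ x in a..b, (x - (a + b) / 2) * f' x = (b - a) * (f a + f b) / 2 - ∫ x in a..b, f x`.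
If `|f'|` is convex it lies below its chord on `[a, b]`, and integrating `|x - (a + b) / 2|`
against that chord gives the trapezoid bound `(b - a) ^ 2 * (|f' a| + |f' b|) / 8`.
For `f x = x ^ θ` the function `|f'| = θ |x| ^ (θ - 1)` is convex; dividing by `b - a` yields the
inequality between the arithmetic and the generalized logarithmic mean. -/

open intervalIntegral Set
open MeasureTheory (volume)

lemma integral_quadratic (u v c₀ c₁ c₂ : ℝ) :
    ∫ x in u..v, (c₀ + c₁ * x + c₂ * x ^ 2) =
      c₀ * (v - u) + c₁ * (v ^ 2 - u ^ 2) / 2 + c₂ * (v ^ 3 - u ^ 3) / 3 := by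
  rw [integral_add, integral_add, integral_const_mul, integral_const_mul, integral_id,
    integral_pow, intervalIntegral.integral_const, smul_eq_mul]
  · ring
  all_goals exact Continuous.intervalIntegrable (by fun_prop) _ _

lemma integral_abs_sub_midpoint_mul_chord {a b : ℝ} (hab : a ≤ b) (p q : ℝ) :
    ∫ x in a..b, |x - (a + b) / 2| * ((b - x) * p + (x - a) * q) =
      (b - a) ^ 3 * (p + q) / 8 := by
  set m := (a + b) / 2 with hm
  have hint : ∀ u v, IntervalIntegrable
      (fun x => |x - m| * ((b - x) * p + (x - a) * q)) volume u v :=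
    fun u v => Continuous.intervalIntegrable (by fun_prop) u v
  have hleft : ∫ x in a..m, |x - m| * ((b - x) * p + (x - a) * q) =
      ∫ x in a..m,
        (m * (b * p - a * q) + (m * (q - p) - (b * p - a * q)) * x + (p - q) * x ^ 2) := by
    refine integral_congr fun x hx => ?_
    rw [uIcc_of_le (by linarith)] at hx
    simp only [abs_of_nonpos (sub_nonpos.2 hx.2)]
    ring
  have hright : ∫ x in m..b, |x - m| * ((b - x) * p + (x - a) * q) =
      ∫ x in m..b,
        (-(m * (b * p - a * q)) + -(m * (q - p) - (b * p - a * q)) * x + -(p - q) * x ^ 2) := by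
    refine integral_congr fun x hx => ?_
    rw [uIcc_of_le (by linarith)] at hx
    simp only [abs_of_nonneg (sub_nonneg.2 hx.1)]
    ring
  rw [← integral_add_adjacent_intervals (hint a m) (hint m b), hleft, hright,
    integral_quadratic, integral_quadratic, hm]
  ring

lemma ConvexOn.mul_le_chord {g : ℝ → ℝ} {a b x : ℝ} (hg : ConvexOn ℝ (Icc a b) g)
    (hx : x ∈ Icc a b) : (b - a) * g x ≤ (b - x) * g a + (x - a) * g b := by
  have ha : a ∈ Icc a b := left_mem_Icc.2 (hx.1.trans hx.2)
  have hb : b ∈ Icc a b := right_mem_Icc.2 (hx.1.trans hx.2)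
  rcases hx.1.eq_or_lt with rfl | hax
  · simp
  rcases hx.2.eq_or_lt with rfl | hxb
  · simp
  exact hg.secant_mono_aux1 ha hb hax hxb

lemma integral_sub_midpoint_mul_deriv {f f' : ℝ → ℝ} {a b : ℝ}
    (hf : ∀ x ∈ uIcc a b, HasDerivAt f (f' x) x)
    (hf' : IntervalIntegrable f' volume a b) :
    ∫ x in a..b, (x - (a + b) / 2) * f' x = (b - a) * (f a + f b) / 2 - ∫ x in a..b, f x := by
  rw [integral_mul_deriv_eq_deriv_mul (u := fun x => x - (a + b) / 2) (u' := fun _ => 1)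
    (fun x _ => (hasDerivAt_id x).sub_const _) hf intervalIntegrable_const hf']
  simp only [one_mul]
  ring

theorem abs_trapezoid_sub_integral_le {f f' : ℝ → ℝ} {a b : ℝ} (hab : a < b)
    (hf : ∀ x ∈ uIcc a b, HasDerivAt f (f' x) x) (hf' : IntervalIntegrable f' volume a b)
    (hconv : ConvexOn ℝ (Icc a b) fun x => |f' x|) :
    |(b - a) * (f a + f b) / 2 - ∫ x in a..b, f x| ≤ (b - a) ^ 2 * (|f' a| + |f' b|) / 8 := by
  have hba : 0 < b - a := sub_pos.2 hab
  refine le_of_mul_le_mul_left ?_ hba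
  calc (b - a) * |(b - a) * (f a + f b) / 2 - ∫ x in a..b, f x|
      = (b - a) * |∫ x in a..b, (x - (a + b) / 2) * f' x| := by
        rw [integral_sub_midpoint_mul_deriv hf hf']
    _ ≤ (b - a) * ∫ x in a..b, |x - (a + b) / 2| * |f' x| := by
        gcongr
        refine (abs_integral_le_integral_abs hab.le).trans_eq ?_
        simp only [abs_mul]
    _ = ∫ x in a..b, (b - a) * (|x - (a + b) / 2| * |f' x|) := (integral_const_mul _ _).symm
    _ ≤ ∫ x in a..b, |x - (a + b) / 2| * ((b - x) * |f' a| + (x - a) * |f' b|) := by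
        refine integral_mono_on hab.le ?_ (Continuous.intervalIntegrable (by fun_prop) _ _)
          fun x hx => ?_
        · exact (hf'.abs.continuousOn_mul (by fun_prop)).const_mul _
        · rw [mul_left_comm]
          exact mul_le_mul_of_nonneg_left (hconv.mul_le_chord hx) (abs_nonneg _)
    _ = (b - a) * ((b - a) ^ 2 * (|f' a| + |f' b|) / 8) := by
        rw [integral_abs_sub_midpoint_mul_chord hab.le]
        ring

theorem special_means_ineq_general (m1 m2 : ℝ) (hlt : m1 < m2) (θ : ℕ) :
    |(m1 ^ θ + m2 ^ θ) / 2 -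
        (m2 ^ (θ + 1) - m1 ^ (θ + 1)) / ((θ + 1 : ℝ) * (m2 - m1))| ≤
      ((θ : ℝ) * (m2 - m1) / 4) * ((|m1| ^ (θ - 1) + |m2| ^ (θ - 1)) / 2) := by
  have hconv : ConvexOn ℝ (Icc m1 m2) fun x => |(θ : ℝ) * x ^ (θ - 1)| := by
    simp only [abs_mul, abs_pow, Nat.abs_cast]
    exact (((convexOn_norm (convex_Icc m1 m2)).pow (fun x _ => norm_nonneg x) _).smul
      (Nat.cast_nonneg θ))
  have key := abs_trapezoid_sub_integral_le hlt (fun x _ => hasDerivAt_pow θ x)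
    (Continuous.intervalIntegrable (by fun_prop) _ _) hconv
  rw [integral_pow] at key
  simp only [abs_mul, abs_pow, Nat.abs_cast] at key
  have hba : 0 < m2 - m1 := sub_pos.2 hlt
  have hscale :
      (m1 ^ θ + m2 ^ θ) / 2 - (m2 ^ (θ + 1) - m1 ^ (θ + 1)) / ((θ + 1 : ℝ) * (m2 - m1)) =
      ((m2 - m1) * (m1 ^ θ + m2 ^ θ) / 2 - (m2 ^ (θ + 1) - m1 ^ (θ + 1)) / (θ + 1)) /
        (m2 - m1) := by
    field_simp
  rw [hscale, abs_div, abs_of_pos hba, div_le_iff₀ hba]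
  exact key.trans_eq (by ring)

theorem special_means_ineq (m1 m2 : ℝ) (hlt : m1 < m2) (θ : ℕ) (hθ : 2 ≤ θ) :
    |(m1 ^ θ + m2 ^ θ) / 2 -
        (m2 ^ (θ + 1) - m1 ^ (θ + 1)) / ((θ + 1 : ℝ) * (m2 - m1))| ≤
      ((θ : ℝ) * (m2 - m1) / 4) * ((|m1| ^ (θ - 1) + |m2| ^ (θ - 1)) / 2) :=
  special_means_ineq_general m1 m2 hlt θ
end
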